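/- Let f be L-gradient Lipschitz with global minimum value f*, and consider iterates x^t = x^{t−1} − η v^{t−1} + ξ^t with ‖ξ^t‖ ≤ r for t = 1,…,T, where η ≤ 1/L. Then (η/2)·∑_{t=1}^T ‖∇f(x^{t−1})‖² ≤ f(x^0) − f* + η·∑_{t=1}^T ‖∇f(x^{t−1}) − v^{t−1}‖² + T·r²/η. -/

import Mathlib

/-!
Each perturbed step decreases `f` by at least `η/2 ‖∇f‖² - η ‖∇f - v‖² - r²/η`: by the descent
lemma with `L ≤ 1/η`, completing the square leaves `‖η (∇f - v) + ξ‖² / (2η) - η/2 ‖∇f‖²`, and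
`‖a + b‖² ≤ 2‖a‖² + 2‖b‖²` splits the square. Summing over the `T` steps telescopes, and
`f (x T) ≥ f*`.
-/

open Finset InnerProductSpace
open scoped Gradient

theorem norm_add_sq_le {E : Type*} [SeminormedAddCommGroup E] (a b : E) :
    ‖a + b‖ ^ 2 ≤ 2 * (‖a‖ ^ 2 + ‖b‖ ^ 2) :=
  (pow_le_pow_left₀ (norm_nonneg _) (norm_add_le a b) 2).trans add_sq_le

theorem inner_add_norm_sq_div_eq {E : Type*} [NormedAddCommGroup E] [InnerProductSpace ℝ E]
    (g δ : E) {η : ℝ} (hη : η ≠ 0) :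
    ⟪g, δ⟫_ℝ + ‖δ‖ ^ 2 / (2 * η) = ‖δ + η • g‖ ^ 2 / (2 * η) - η / 2 * ‖g‖ ^ 2 := by
  rw [norm_add_sq_real, norm_smul, inner_smul_right, real_inner_comm, Real.norm_eq_abs,
    mul_pow, sq_abs]
  field_simp
  ring

section Smooth

variable {E : Type*} [NormedAddCommGroup E] [InnerProductSpace ℝ E] [CompleteSpace E]
  {f : E → ℝ} {L : ℝ}

theorem hasDerivAt_comp_add_smul {x δ : E} {t : ℝ} (hf : DifferentiableAt ℝ f (x + t • δ)) :
    HasDerivAt (fun s : ℝ => f (x + s • δ)) ⟪∇ f (x + t • δ), δ⟫_ℝ t := by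
  have hline : HasDerivAt (fun s : ℝ => x + s • δ) δ t := by
    simpa using ((hasDerivAt_id t).smul_const δ).const_add x
  rw [hf.hasGradientAt.fderiv_apply.symm]
  exact hf.hasFDerivAt.comp_hasDerivAt t hline

theorem le_add_inner_gradient_add_sq_of_lipschitz_gradient (hf : Differentiable ℝ f)
    (hlip : ∀ x y, ‖∇ f x - ∇ f y‖ ≤ L * ‖x - y‖) (x y : E) :
    f y ≤ f x + ⟪∇ f x, y - x⟫_ℝ + L / 2 * ‖y - x‖ ^ 2 := by
  set δ := y - x
  let gap : ℝ → ℝ := fun t => f x + t * ⟪∇ f x, δ⟫_ℝ + L / 2 * t ^ 2 * ‖δ‖ ^ 2 - f (x + t • δ)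
  have hgap : ∀ t, HasDerivAt gap
      (⟪∇ f x, δ⟫_ℝ + L * t * ‖δ‖ ^ 2 - ⟪∇ f (x + t • δ), δ⟫_ℝ) t := fun t => by
    have hquad := (((hasDerivAt_id t).mul_const ⟪∇ f x, δ⟫_ℝ).const_add (f x)).add
      (((hasDerivAt_pow 2 t).const_mul (L / 2)).mul_const (‖δ‖ ^ 2))
    refine (hquad.sub (hasDerivAt_comp_add_smul (x := x) (δ := δ) (hf _))).congr_deriv ?_
    simp only [one_mul, Nat.cast_ofNat]
    ring
  have hmono : MonotoneOn gap (Set.Icc 0 1) := by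
    refine monotoneOn_of_hasDerivWithinAt_nonneg (convex_Icc 0 1)
      (fun t _ => (hgap t).continuousAt.continuousWithinAt)
      (fun t _ => (hgap t).hasDerivWithinAt) fun t ht => ?_
    rw [interior_Icc] at ht
    have hinc : ⟪∇ f (x + t • δ) - ∇ f x, δ⟫_ℝ ≤ L * t * ‖δ‖ ^ 2 :=
      calc ⟪∇ f (x + t • δ) - ∇ f x, δ⟫_ℝ
          ≤ ‖∇ f (x + t • δ) - ∇ f x‖ * ‖δ‖ := real_inner_le_norm _ _
        _ ≤ L * ‖x + t • δ - x‖ * ‖δ‖ := by gcongr; exact hlip _ _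
        _ = L * t * ‖δ‖ ^ 2 := by
          rw [add_sub_cancel_left, norm_smul, Real.norm_of_nonneg ht.1.le]; ring
    rw [inner_sub_left] at hinc
    linarith
  have h01 := hmono ⟨le_rfl, zero_le_one⟩ ⟨zero_le_one, le_rfl⟩ zero_le_one
  simp only [gap, δ, zero_smul, add_zero, one_smul, add_sub_cancel] at h01
  linarith

theorem apply_perturbed_gradient_step_le (hf : Differentiable ℝ f)
    (hlip : ∀ x y, ‖∇ f x - ∇ f y‖ ≤ L * ‖x - y‖) {η r : ℝ} (hη : 0 < η) (hLη : L * η ≤ 1)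
    (x w z : E) (hz : ‖z‖ ≤ r) :
    f (x - η • w + z) ≤ f x - η / 2 * ‖∇ f x‖ ^ 2 + η * ‖∇ f x - w‖ ^ 2 + r ^ 2 / η := by
  set g := ∇ f x
  have hdesc := le_add_inner_gradient_add_sq_of_lipschitz_gradient hf hlip x (x - η • w + z)
  rw [show x - η • w + z - x = z - η • w by abel] at hdesc
  have hL : L / 2 ≤ 1 / (2 * η) := by
    rw [le_div_iff₀ (by positivity)]; linarith
  have hquad : L / 2 * ‖z - η • w‖ ^ 2 ≤ ‖z - η • w‖ ^ 2 / (2 * η) := by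
    simpa only [one_div_mul_eq_div] using mul_le_mul_of_nonneg_right hL (sq_nonneg _)
  have hsplit : ‖z - η • w + η • g‖ ^ 2 ≤ 2 * (η ^ 2 * ‖g - w‖ ^ 2 + r ^ 2) := by
    have hzr : ‖z‖ ^ 2 ≤ r ^ 2 := pow_le_pow_left₀ (norm_nonneg z) hz 2
    calc ‖z - η • w + η • g‖ ^ 2 = ‖η • (g - w) + z‖ ^ 2 := by congr 2; rw [smul_sub]; abel
      _ ≤ 2 * (‖η • (g - w)‖ ^ 2 + ‖z‖ ^ 2) := norm_add_sq_le _ _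
      _ ≤ 2 * (η ^ 2 * ‖g - w‖ ^ 2 + r ^ 2) := by
        rw [norm_smul, mul_pow, Real.norm_of_nonneg hη.le]; gcongr
  have hcomplete := inner_add_norm_sq_div_eq g (z - η • w) hη.ne'
  have hdiv : ‖z - η • w + η • g‖ ^ 2 / (2 * η) ≤ η * ‖g - w‖ ^ 2 + r ^ 2 / η := by
    calc ‖z - η • w + η • g‖ ^ 2 / (2 * η) ≤ 2 * (η ^ 2 * ‖g - w‖ ^ 2 + r ^ 2) / (2 * η) := by
          gcongr
      _ = η * ‖g - w‖ ^ 2 + r ^ 2 / η := by field_simp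
  linarith

end Smooth

theorem sum_range_le_sub_of_le_sub {a b : ℕ → ℝ} {T : ℕ} {m : ℝ}
    (hstep : ∀ i < T, a (i + 1) ≤ a i - b i) (hm : m ≤ a T) :
    ∑ i ∈ range T, b i ≤ a 0 - m :=
  calc ∑ i ∈ range T, b i ≤ ∑ i ∈ range T, (a i - a (i + 1)) :=
        sum_le_sum fun i hi => by linarith [hstep i (mem_range.mp hi)]
    _ = a 0 - a T := sum_range_sub' a T
    _ ≤ a 0 - m := by linarith

theorem sum_Icc_one_sub_one_eq_sum_range {M : Type*} [AddCommMonoid M] (h : ℕ → M) (T : ℕ) :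
    ∑ t ∈ Icc 1 T, h (t - 1) = ∑ i ∈ range T, h i := by
  rw [← Ico_add_one_right_eq_Icc, sum_Ico_eq_sum_range]
  simp

theorem sum_gradient_norm_sq_bound_general {d : ℕ} (f : EuclideanSpace ℝ (Fin d) → ℝ)
    (L η r fstar : ℝ) (T : ℕ)
    (hdiff : Differentiable ℝ f)
    (hlip : ∀ x y, ‖gradient f x - gradient f y‖ ≤ L * ‖x - y‖)
    (hη : 0 < η) (hηL : η ≤ 1 / L)
    (hfstar : ∀ x, fstar ≤ f x)
    (x v ξ : ℕ → EuclideanSpace ℝ (Fin d))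
    (hξ : ∀ t, ‖ξ t‖ ≤ r)
    (hrec : ∀ t, 1 ≤ t → t ≤ T → x t = x (t - 1) - η • v (t - 1) + ξ t) :
    η / 2 * ∑ t ∈ Finset.Icc 1 T, ‖gradient f (x (t - 1))‖ ^ 2 ≤
      f (x 0) - fstar +
        η * ∑ t ∈ Finset.Icc 1 T, ‖gradient f (x (t - 1)) - v (t - 1)‖ ^ 2 +
        (T : ℝ) * r ^ 2 / η := by
  have hL : 0 < L := by
    by_contra! hL
    exact (hη.trans_le hηL).not_ge (one_div_nonpos.mpr hL)
  have hLη : L * η ≤ 1 := by rwa [le_div_iff₀ hL, mul_comm] at hηL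
  have hstep : ∀ i < T, f (x (i + 1)) ≤ f (x i) - (η / 2 * ‖∇ f (x i)‖ ^ 2
      - η * ‖∇ f (x i) - v i‖ ^ 2 - r ^ 2 / η) := fun i hi => by
    rw [hrec (i + 1) (Nat.le_add_left 1 i) hi, Nat.add_sub_cancel]
    linarith [apply_perturbed_gradient_step_le hdiff hlip hη hLη (x i) (v i) _ (hξ (i + 1))]
  have htel := sum_range_le_sub_of_le_sub (a := fun i => f (x i)) hstep (hfstar (x T))
  rw [sum_Icc_one_sub_one_eq_sum_range (fun i => ‖∇ f (x i)‖ ^ 2),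
    sum_Icc_one_sub_one_eq_sum_range (fun i => ‖∇ f (x i) - v i‖ ^ 2)]
  simp only [sum_sub_distrib, ← mul_sum, sum_const, card_range, nsmul_eq_mul] at htel
  rw [mul_div_assoc]
  linarith

theorem sum_gradient_norm_sq_bound {d : ℕ} (f : EuclideanSpace ℝ (Fin d) → ℝ)
    (L η r fstar : ℝ) (T : ℕ)
    (hdiff : Differentiable ℝ f)
    (hlip : ∀ x y, ‖gradient f x - gradient f y‖ ≤ L * ‖x - y‖)
    (hL : 0 < L) (hη : 0 < η) (hηL : η ≤ 1 / L)
    (hfstar : ∀ x, fstar ≤ f x)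
    (x v ξ : ℕ → EuclideanSpace ℝ (Fin d))
    (hξ : ∀ t, ‖ξ t‖ ≤ r)
    (hrec : ∀ t, 1 ≤ t → t ≤ T → x t = x (t - 1) - η • v (t - 1) + ξ t) :
    η / 2 * ∑ t ∈ Finset.Icc 1 T, ‖gradient f (x (t - 1))‖ ^ 2 ≤
      f (x 0) - fstar +
        η * ∑ t ∈ Finset.Icc 1 T, ‖gradient f (x (t - 1)) - v (t - 1)‖ ^ 2 +
        (T : ℝ) * r ^ 2 / η :=
  sum_gradient_norm_sq_bound_general f L η r fstar T hdiff hlip hη hηL hfstar x v ξ hξ hrec
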